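/- Let u and v be unit vectors in a real inner product space and let Pr_v denote the orthogonal projection onto the span of v. Then there exists a ∈ {-1, 1} such that ‖a·v - u‖ ≤ 2·‖u - Pr_v u‖. -/

import Mathlib

/-!
With `t = ⟪u, v⟫` and the sign `a` chosen so that `a t = |t|`, both sides are explicit in `|t|`:
`‖a v - u‖² = 2 (1 - |t|)` and `‖u - t v‖² = 1 - t² = (1 - |t|)(1 + |t|)`, so the claim reduces to
`2 (1 - |t|) ≤ 4 (1 - |t|)(1 + |t|)`, which holds because `0 ≤ |t| ≤ 1`.
-/

open scoped RealInnerProductSpace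

section

variable {E : Type*} [NormedAddCommGroup E] [InnerProductSpace ℝ E]

theorem norm_sub_real_inner_smul_sq (u : E) {v : E} (hv : ‖v‖ = 1) :
    ‖u - ⟪u, v⟫ • v‖ ^ 2 = ‖u‖ ^ 2 - ⟪u, v⟫ ^ 2 := by
  rw [norm_sub_sq_real, real_inner_smul_right, norm_smul, hv, mul_one, Real.norm_eq_abs, sq_abs]
  ring

theorem norm_smul_sub_sq_of_sq_eq_one (u : E) {v : E} (hv : ‖v‖ = 1) {a : ℝ} (ha : a ^ 2 = 1) :
    ‖a • v - u‖ ^ 2 = 1 + ‖u‖ ^ 2 - 2 * (a * ⟪u, v⟫) := by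
  rw [norm_sub_sq_real, real_inner_smul_left, real_inner_comm, norm_smul, hv, mul_one,
    Real.norm_eq_abs, sq_abs, ha]
  ring

theorem norm_smul_sub_le_two_mul_norm_sub_real_inner_smul {u v : E} (hu : ‖u‖ = 1)
    (hv : ‖v‖ = 1) {a : ℝ} (ha : a ^ 2 = 1) (hat : 0 ≤ a * ⟪u, v⟫) :
    ‖a • v - u‖ ≤ 2 * ‖u - ⟪u, v⟫ • v‖ := by
  have hinner : ⟪u, v⟫ ^ 2 ≤ 1 := by
    simpa [sq_le_one_iff_abs_le_one, hu, hv] using abs_real_inner_le_norm u v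
  have hsq : ‖a • v - u‖ ^ 2 ≤ (2 * ‖u - ⟪u, v⟫ • v‖) ^ 2 := by
    rw [mul_pow, norm_smul_sub_sq_of_sq_eq_one u hv ha, norm_sub_real_inner_smul_sq u hv, hu]
    have hat_sq : (a * ⟪u, v⟫) ^ 2 = ⟪u, v⟫ ^ 2 := by rw [mul_pow, ha, one_mul]
    nlinarith
  exact le_of_pow_le_pow_left₀ two_ne_zero (by positivity) hsq

end

/-- Projection-to-alignment inequality (Proposition 18 of von Luxburg–Bousquet–Belkin):
for unit vectors `u, v` in a real inner product space, there is a sign `a ∈ {-1, 1}`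
with `‖a·v - u‖ ≤ 2·‖u - Pr_v u‖`, where `Pr_v u = ⟨u, v⟩·v`. -/
theorem stmt17 {E : Type*} [NormedAddCommGroup E] [InnerProductSpace ℝ E]
    (u v : E) (hu : ‖u‖ = 1) (hv : ‖v‖ = 1) :
    ∃ a : ℝ, (a = 1 ∨ a = -1) ∧
      ‖a • v - u‖ ≤ 2 * ‖u - (inner ℝ u v : ℝ) • v‖ := by
  rcases le_total 0 ⟪u, v⟫ with hpos | hneg
  · exact ⟨1, Or.inl rfl,
      norm_smul_sub_le_two_mul_norm_sub_real_inner_smul hu hv (one_pow 2) (by simpa using hpos)⟩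
  · exact ⟨-1, Or.inr rfl,
      norm_smul_sub_le_two_mul_norm_sub_real_inner_smul hu hv (by norm_num) (by simpa using hneg)⟩
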